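/- For all integers k ≥ 3, all i with 1 ≤ i ≤ k−1, and all m, n ≥ 0, one has π(a^m · c^n · b^i · d^(k−i)) = π(c^(m+n) · b · d^(k−1)) in N. -/

import Mathlib

open MvPolynomial

/-- `S = ℤ/2[a,b,c,d] ≅ H^*(BSO(3)²; ℤ/2)` with `a = w₂'`, `b = w₃'`, `c = w₂''`, `d = w₃''`. -/
noncomputable abbrev S : Type := MvPolynomial (Fin 4) (ZMod 2)

noncomputable def a : S := X 0
noncomputable def b : S := X 1
noncomputable def c : S := X 2
noncomputable def d : S := X 3

/-- The ideal `J = (a·d + c·b, b·d² + b²·d)` of relations. -/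
noncomputable def J : Ideal S := Ideal.span {a * d + c * b, b * d ^ 2 + b ^ 2 * d}

/-- `N = S ⧸ J`, the bottom line of the `E_∞`-term. -/
noncomputable abbrev N : Type := S ⧸ J

/-- The quotient map `π : S → N`. -/
noncomputable def π : S →+* N := Ideal.Quotient.mk J

/-! In `N` the relation `b·d² = b²·d` lets one trade powers of `b` for powers of `d` as long as
both exponents stay positive, so `b^i d^(k-i) = b d^(k-1)`. Once the power of `d` is at least two,
`a·d = c·b` turns `a · b d^(k-1)` into `c · b² d^(k-2) = c · b d^(k-1)`, so every `a` may be
replaced by `c`. -/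

section CommMonoid

variable {M : Type*} [CommMonoid M] {x y : M}

theorem pow_succ_mul_pow_succ_of_mul_sq_eq (h : x * y ^ 2 = x ^ 2 * y) (i j : ℕ) :
    x ^ (i + 1) * y ^ (j + 1) = x * y ^ (i + j + 1) := by
  induction i generalizing j with
  | zero => simp
  | succ i ih =>
    calc x ^ (i + 2) * y ^ (j + 1) = x ^ i * y ^ j * (x ^ 2 * y) := by
          simp only [pow_succ, pow_zero, one_mul]; ac_rfl
      _ = x ^ i * y ^ j * (x * y ^ 2) := by rw [h]
      _ = x ^ (i + 1) * y ^ (j + 1 + 1) := by simp only [pow_succ, pow_zero, one_mul]; ac_rfl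
      _ = x * y ^ (i + 1 + j + 1) := by rw [ih]; congr 2; omega

theorem mul_mul_pow_eq_of_mul_eq_of_mul_sq_eq {p q : M} (hpq : p * y = q * x)
    (h : x * y ^ 2 = x ^ 2 * y) (t : ℕ) :
    p * (x * y ^ (t + 2)) = q * (x * y ^ (t + 2)) :=
  calc p * (x * y ^ (t + 2)) = p * y * (x * y ^ (t + 1)) := by rw [pow_succ]; ac_rfl
    _ = q * (x ^ (1 + 1) * y ^ (t + 1)) := by rw [hpq, pow_two]; ac_rfl
    _ = q * (x * y ^ (t + 2)) := by rw [pow_succ_mul_pow_succ_of_mul_sq_eq h, add_comm 1 t]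

theorem pow_mul_eq_pow_mul_of_mul_eq {p q z : M} (h : p * z = q * z) (m : ℕ) :
    p ^ m * z = q ^ m * z := by
  induction m with
  | zero => simp only [pow_zero]
  | succ m ih => rw [pow_succ', mul_assoc, ih, mul_left_comm, h, ← mul_assoc, ← pow_succ]

end CommMonoid

theorem π_eq_of_add_mem {x y : S} (h : x + y ∈ J) : π x = π y := by
  rwa [π, Ideal.Quotient.eq, CharTwo.sub_eq_add]

theorem π_a_mul_π_d : π a * π d = π c * π b := by
  simpa only [map_mul] using π_eq_of_add_mem (Ideal.subset_span (Set.mem_insert _ _))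

theorem π_b_mul_π_d_sq : π b * π d ^ 2 = π b ^ 2 * π d := by
  simpa only [map_mul, map_pow] using
    π_eq_of_add_mem (Ideal.subset_span (Set.mem_insert_of_mem _ rfl))

theorem stmt_9 (k i m n : ℕ) (hk : 3 ≤ k) (hi1 : 1 ≤ i) (hik : i ≤ k - 1) :
    π (a ^ m * c ^ n * b ^ i * d ^ (k - i)) = π (c ^ (m + n) * b * d ^ (k - 1)) := by
  obtain ⟨i', rfl⟩ : ∃ i', i = i' + 1 := ⟨i - 1, by omega⟩
  obtain ⟨j, hj⟩ : ∃ j, k - (i' + 1) = j + 1 := ⟨k - i' - 2, by omega⟩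
  obtain ⟨t, ht⟩ : ∃ t, k - 1 = t + 2 := ⟨k - 3, by omega⟩
  have hbd : π b ^ (i' + 1) * π d ^ (j + 1) = π b * π d ^ (t + 2) := by
    rw [pow_succ_mul_pow_succ_of_mul_sq_eq π_b_mul_π_d_sq]
    congr 2
    omega
  have had := pow_mul_eq_pow_mul_of_mul_eq
    (mul_mul_pow_eq_of_mul_eq_of_mul_sq_eq π_a_mul_π_d π_b_mul_π_d_sq t) m
  simp only [map_mul, map_pow, hj, ht]
  calc π a ^ m * π c ^ n * π b ^ (i' + 1) * π d ^ (j + 1)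
      = π c ^ n * (π a ^ m * (π b * π d ^ (t + 2))) := by rw [← hbd]; ring
    _ = π c ^ (m + n) * π b * π d ^ (t + 2) := by rw [had]; ring
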